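/- arXiv:2510.27331 — 2 statements merged into one kernel-verified Lean document; each statement's English description precedes it below -/
import Mathlib

section
/- Let f : [0,1] → ℝ be absolutely continuous with derivative f' ∈ L¹(0,1). Then for every α ∈ ℝ, k ≥ 1 and p ∈ [1,∞) with f ∈ L^p(0,1), Λ(α, k, p, f) ≤ Λ(α − 1, k − 1, 1, f'). -/
open MeasureTheory

/-- Wei's irregularity index `Λ(α, k, p, f)` on `[0,1]`. -/
noncomputable def weiIndex (α : ℝ) (k : ℕ) (p : ℝ) (f : ℝ → ℝ) : ℝ :=
  sInf { v : ℝ | ∃ (a b : ℝ) (P : Polynomial ℝ), 0 ≤ a ∧ a < b ∧ b ≤ 1 ∧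
    P.natDegree ≤ k ∧
    v = (b - a) ^ (-α) * (⨍ x in Set.Ioo a b, |f x - P.eval x| ^ p) ^ (1 / p) }

/-! Given a polynomial `P` approximating `f'` on `J = (a, b)`, let `Q` be the primitive of `P` with
`Q a = f a`; it has degree one more than `P`. Then `f - Q` is the integral of `f' - P` from `a`,
so `|f - Q| ≤ ∫_J |f' - P| = |J| ⨍_J |f' - P|` on `J`, and the `L^p` average of `f - Q` obeys the
same bound. The factor `|J|` is exactly what turns `|J|^(-α)` into `|J|^(-(α - 1))`. -/

open Polynomial Set

namespace Polynomial

variable {K : Type*} [Field K]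

noncomputable def antiderivative (P : K[X]) : K[X] :=
  ∑ i ∈ Finset.range (P.natDegree + 1), C (P.coeff i / (i + 1)) * X ^ (i + 1)

@[simp]
theorem derivative_antiderivative [CharZero K] (P : K[X]) : derivative (antiderivative P) = P := by
  rw [antiderivative, map_sum]
  conv_rhs => rw [P.as_sum_range]
  refine Finset.sum_congr rfl fun i _ => ?_
  rw [derivative_C_mul_X_pow, Nat.add_sub_cancel, C_mul_X_pow_eq_monomial]
  congr 1
  push_cast
  field_simp

theorem natDegree_antiderivative_le (P : K[X]) :
    (antiderivative P).natDegree ≤ P.natDegree + 1 :=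
  natDegree_sum_le_of_forall_le _ _ fun i hi =>
    (natDegree_C_mul_X_pow_le _ _).trans (by simpa [Nat.lt_succ_iff] using hi)

theorem exists_derivative_eq_eval_eq [CharZero K] (P : K[X]) (a c : K) :
    ∃ Q : K[X], derivative Q = P ∧ Q.natDegree ≤ P.natDegree + 1 ∧ Q.eval a = c := by
  refine ⟨C (c - (antiderivative P).eval a) + antiderivative P, by simp, ?_, by simp⟩
  exact (natDegree_add_le _ _).trans
    (max_le (by simp) (natDegree_antiderivative_le P))

end Polynomial

theorem eq_add_intervalIntegral_of_mem_Icc {f f' : ℝ → ℝ} {c d a x : ℝ}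
    (hf' : IntegrableOn f' (Icc c d)) (hf : ∀ y ∈ Icc c d, f y = f c + ∫ t in c..y, f' t)
    (ha : a ∈ Icc c d) (hx : x ∈ Icc c d) : f x = f a + ∫ t in a..x, f' t := by
  have hint : ∀ y ∈ Icc c d, IntervalIntegrable f' volume c y := fun y hy =>
    (hf'.mono_set (uIcc_subset_Icc (left_mem_Icc.2 (ha.1.trans ha.2)) hy)).intervalIntegrable
  rw [hf x hx, hf a ha, ← intervalIntegral.integral_add_adjacent_intervals (hint a ha)
    ((hint a ha).symm.trans (hint x hx))]
  ring

theorem abs_sub_eval_le_intervalIntegral {f f' : ℝ → ℝ} {P Q : ℝ[X]} {a b x : ℝ}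
    (hQ : derivative Q = P) (hQa : Q.eval a = f a) (hf' : IntervalIntegrable f' volume a b)
    (hfx : f x = f a + ∫ t in a..x, f' t) (hx : x ∈ Icc a b) :
    |f x - Q.eval x| ≤ ∫ t in a..b, |f' t - P.eval t| := by
  have hPint : ∀ c d, IntervalIntegrable (fun t => P.eval t) volume c d :=
    fun c d => P.continuous.intervalIntegrable c d
  have hQx : Q.eval x = f a + ∫ t in a..x, P.eval t := by
    rw [intervalIntegral.integral_eq_sub_of_hasDerivAt (fun t _ => hQ ▸ Q.hasDerivAt t)
      (hPint a x), hQa]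
    ring
  have hdiff : f x - Q.eval x = ∫ t in a..x, (f' t - P.eval t) := by
    rw [intervalIntegral.integral_sub
      (hf'.mono_set (uIcc_subset_uIcc_left (Icc_subset_uIcc hx))) (hPint a x), hfx, hQx]
    ring
  rw [hdiff]
  calc |∫ t in a..x, (f' t - P.eval t)| ≤ ∫ t in a..x, |f' t - P.eval t| :=
        intervalIntegral.abs_integral_le_integral_abs hx.1
    _ ≤ ∫ t in a..b, |f' t - P.eval t| :=
        intervalIntegral.integral_mono_interval le_rfl hx.1 hx.2
          (Filter.Eventually.of_forall fun t => abs_nonneg _) ((hf'.sub (hPint a b)).abs)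

theorem setAverage_abs_rpow_rpow_inv_le {α : Type*} [MeasurableSpace α] {μ : Measure α}
    {s : Set α} {g : α → ℝ} {M p : ℝ} (hs : μ s ≠ ⊤) (hM : 0 ≤ M) (hp : 0 < p)
    (hg : ∀ x ∈ s, |g x| ≤ M) : (⨍ x in s, |g x| ^ p ∂μ) ^ (1 / p) ≤ M := by
  have hint : ∫ x in s, |g x| ^ p ∂μ ≤ M ^ p * μ.real s := by
    refine (Real.le_norm_self _).trans (norm_setIntegral_le_of_norm_le_const hs.lt_top ?_)
    intro x hx
    rw [Real.norm_of_nonneg (by positivity)]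
    exact Real.rpow_le_rpow (abs_nonneg _) (hg x hx) hp.le
  have havg : ⨍ x in s, |g x| ^ p ∂μ ≤ M ^ p := by
    rw [setAverage_eq, smul_eq_mul]
    rcases (measureReal_nonneg (μ := μ) (s := s)).eq_or_lt with h0 | hpos
    · rw [← h0, inv_zero, zero_mul]; positivity
    · rw [inv_mul_le_iff₀ hpos, mul_comm]; exact hint
  calc (⨍ x in s, |g x| ^ p ∂μ) ^ (1 / p) ≤ (M ^ p) ^ (1 / p) :=
        Real.rpow_le_rpow (integral_nonneg fun _ => by positivity) havg (by positivity)
    _ = M := by rw [← Real.rpow_mul hM, mul_one_div_cancel hp.ne', Real.rpow_one]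

theorem setAverage_Ioo_eq_inv_mul_intervalIntegral {g : ℝ → ℝ} {a b : ℝ} (hab : a ≤ b) :
    ⨍ x in Ioo a b, g x = (b - a)⁻¹ * ∫ x in a..b, g x := by
  rw [setAverage_congr Ioo_ae_eq_Ioc, ← uIoc_of_le hab, interval_average_eq, smul_eq_mul]

theorem weiIndex_le {α : ℝ} {k : ℕ} {p : ℝ} {f : ℝ → ℝ} {a b : ℝ} {P : ℝ[X]} (ha : 0 ≤ a)
    (hab : a < b) (hb : b ≤ 1) (hP : P.natDegree ≤ k) :
    weiIndex α k p f ≤ (b - a) ^ (-α) * (⨍ x in Ioo a b, |f x - P.eval x| ^ p) ^ (1 / p) := by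
  refine csInf_le ⟨0, ?_⟩ ⟨a, b, P, ha, hab, hb, hP, rfl⟩
  rintro _ ⟨a, b, P, -, hab, -, -, rfl⟩
  have : 0 ≤ ⨍ x in Ioo a b, |f x - P.eval x| ^ p := integral_nonneg fun _ => by positivity
  have : 0 ≤ b - a := by linarith
  positivity

theorem le_weiIndex {α : ℝ} {k : ℕ} {p : ℝ} {f : ℝ → ℝ} {c : ℝ}
    (h : ∀ (a b : ℝ) (P : ℝ[X]), 0 ≤ a → a < b → b ≤ 1 → P.natDegree ≤ k →
      c ≤ (b - a) ^ (-α) * (⨍ x in Ioo a b, |f x - P.eval x| ^ p) ^ (1 / p)) :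
    c ≤ weiIndex α k p f := by
  refine le_csInf ⟨_, 0, 1, 0, le_rfl, one_pos, le_rfl, by simp, rfl⟩ ?_
  rintro _ ⟨a, b, P, ha, hab, hb, hP, rfl⟩
  exact h a b P ha hab hb hP

theorem weiIndex_le_of_deriv_general (α : ℝ) (k : ℕ) (hk : 1 ≤ k) (p : ℝ) (hp : 1 ≤ p)
    (f f' : ℝ → ℝ)
    (hf' : IntegrableOn f' (Set.Ioo (0:ℝ) 1))
    (hAC : ∀ x ∈ Set.Icc (0:ℝ) 1, f x = f 0 + ∫ t in (0:ℝ)..x, f' t) :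
    weiIndex α k p f ≤ weiIndex (α - 1) (k - 1) 1 f' := by
  refine le_weiIndex fun a b P ha hab hb hP => ?_
  obtain ⟨Q, hQ, hQdeg, hQa⟩ := P.exists_derivative_eq_eval_eq a (f a)
  have hJ : Icc a b ⊆ Icc 0 1 := Icc_subset_Icc ha hb
  have hf'Icc : IntegrableOn f' (Icc 0 1) := by
    rwa [integrableOn_Icc_iff_integrableOn_Ioo]
  set I := ∫ t in a..b, |f' t - P.eval t|
  have hbound : ∀ x ∈ Ioo a b, |f x - Q.eval x| ≤ I := fun x hx =>
    abs_sub_eval_le_intervalIntegral hQ hQa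
      (hf'Icc.mono_set (uIcc_of_le hab.le ▸ hJ)).intervalIntegrable
      (eq_add_intervalIntegral_of_mem_Icc hf'Icc hAC (hJ (left_mem_Icc.2 hab.le))
        (hJ (Ioo_subset_Icc_self hx)))
      (Ioo_subset_Icc_self hx)
  have hI_nonneg : 0 ≤ I := intervalIntegral.integral_nonneg hab.le fun _ _ => abs_nonneg _
  calc weiIndex α k p f
      ≤ (b - a) ^ (-α) * (⨍ x in Ioo a b, |f x - Q.eval x| ^ p) ^ (1 / p) :=
        weiIndex_le ha hab hb (hQdeg.trans (by omega))
    _ ≤ (b - a) ^ (-α) * I := by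
        gcongr
        exact setAverage_abs_rpow_rpow_inv_le (by simp) hI_nonneg (by linarith) hbound
    _ = (b - a) ^ (-(α - 1)) * ((b - a)⁻¹ * I) := by
        rw [show -(α - 1) = -α + 1 by ring, Real.rpow_add_one (sub_pos.2 hab).ne', mul_assoc,
          mul_inv_cancel_left₀ (sub_pos.2 hab).ne']
    _ = (b - a) ^ (-(α - 1)) * (⨍ x in Ioo a b, |f' x - P.eval x| ^ (1 : ℝ)) ^ (1 / (1 : ℝ)) := by
        simp only [Real.rpow_one, div_one, setAverage_Ioo_eq_inv_mul_intervalIntegral hab.le, I]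

theorem weiIndex_le_of_deriv (α : ℝ) (k : ℕ) (hk : 1 ≤ k) (p : ℝ) (hp : 1 ≤ p)
    (f f' : ℝ → ℝ)
    (hf' : IntegrableOn f' (Set.Ioo (0:ℝ) 1))
    (hAC : ∀ x ∈ Set.Icc (0:ℝ) 1, f x = f 0 + ∫ t in (0:ℝ)..x, f' t)
    (hf : MemLp f (ENNReal.ofReal p) (volume.restrict (Set.Ioo (0:ℝ) 1))) :
    weiIndex α k p f ≤ weiIndex (α - 1) (k - 1) 1 f' :=
  weiIndex_le_of_deriv_general α k hk p hp f f' hf' hAC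
end

section
/- Let f ∈ L^p(0,1) be (ρ,γ)-irregular for some p ∈ [1,∞), ρ ∈ (0,1], γ ∈ [0,1), with constant c_f. Then for every q with qρ > 1 and every ε > 0: (1/|J|)·|{x ∈ J : |f(x) − f_J| ≤ ε c_f^{−q} |J|^{q(1−γ)}}| ≲ ε^{1/q} for every interval J ⊆ [0,1], where f_J is the average of f on J. -/
/-!
The Fejér kernel `K(u) = 4 (1 - cos u) / u² = ∫₀¹ 4 (1 - t) cos (t u) dt` takes the place of the
cutoff `ψ`: it is nonnegative and at least `1` on `[-1, 1]`, and its spectrum lies in `[-1, 1]`.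
So for a finite measure `ν` on `ℝ`, `ν [-δ, δ] ≤ ∫ K (x / δ) dν = ∫₀¹ 4 (1 - t) Re ν̂ (t / δ) dt`,
and a decay `‖ν̂ t‖ ≤ A t ^ (-r)` with `r < 1` yields `ν [-δ, δ] ≤ 4 A δ ^ r / (1 - r)`.
For the occupation measure of `f - f_J` on `J` take `r = 1 / q ≤ ρ` and `A = c |J| ^ γ`; the
choice `δ = ε c ^ (-q) |J| ^ (q (1 - γ))` turns the bound into `4 q / (q - 1) ε ^ (1 / q) |J|`.
-/

open MeasureTheory Real

noncomputable def fejerKernel (u : ℝ) : ℝ :=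
  if u = 0 then 2 else 4 * (1 - cos u) / u ^ 2

lemma fejerKernel_nonneg (u : ℝ) : 0 ≤ fejerKernel u := by
  unfold fejerKernel
  split_ifs
  · norm_num
  · exact div_nonneg (by linarith [cos_le_one u]) (sq_nonneg u)

lemma fejerKernel_le_two (u : ℝ) : fejerKernel u ≤ 2 := by
  unfold fejerKernel
  split_ifs
  · rfl
  · rw [div_le_iff₀ (by positivity)]
    linarith [one_sub_sq_div_two_le_cos (x := u)]

lemma one_le_fejerKernel {u : ℝ} (hu : |u| ≤ 1) : 1 ≤ fejerKernel u := by
  unfold fejerKernel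
  split_ifs with hu0
  · norm_num
  · rw [le_div_iff₀ (by positivity), one_mul]
    have hu2 : u ^ 2 ≤ 1 := by rw [← sq_abs]; exact pow_le_one₀ (abs_nonneg u) hu
    have h4 : |u| ^ 4 ≤ u ^ 2 := by
      rw [show |u| ^ 4 = (|u| ^ 2) ^ 2 by ring, sq_abs]
      nlinarith [sq_nonneg u]
    linarith [(abs_le.mp (cos_bound hu)).2, sq_nonneg u]

lemma measurable_fejerKernel : Measurable fejerKernel :=
  Measurable.ite measurableSet_eq measurable_const (by fun_prop)

lemma integral_mul_cos_eq_fejerKernel (u : ℝ) :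
    ∫ t in (0 : ℝ)..1, 4 * (1 - t) * cos (t * u) = fejerKernel u := by
  rcases eq_or_ne u 0 with rfl | hu
  · have hG (t : ℝ) :
        HasDerivAt (fun t ↦ 4 * t - 2 * t ^ 2) (4 * (1 - t) * cos (t * 0)) t := by
      refine (((hasDerivAt_id t).const_mul 4).sub
        ((hasDerivAt_pow 2 t).const_mul 2)).congr_deriv ?_
      simp only [mul_zero, cos_zero]
      ring
    rw [intervalIntegral.integral_eq_sub_of_hasDerivAt (fun t _ ↦ hG t)
      ((by fun_prop : Continuous _).intervalIntegrable _ _)]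
    norm_num [fejerKernel]
  · have hG (t : ℝ) : HasDerivAt (fun t ↦ 4 * ((1 - t) * sin (t * u) / u - cos (t * u) / u ^ 2))
        (4 * (1 - t) * cos (t * u)) t := by
      have hs := (hasDerivAt_mul_const u (x := t)).sin
      have hc := (hasDerivAt_mul_const u (x := t)).cos
      refine ((((((hasDerivAt_id t).const_sub 1).mul hs).div_const u).sub
        (hc.div_const (u ^ 2))).const_mul 4).congr_deriv ?_
      simp only [id]
      field_simp
      ring
    rw [intervalIntegral.integral_eq_sub_of_hasDerivAt (fun t _ ↦ hG t)
      ((by fun_prop : Continuous _).intervalIntegrable _ _)]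
    simp only [fejerKernel, if_neg hu, one_mul, zero_mul, sub_self, sub_zero, sin_zero, cos_zero,
      zero_div]
    ring

section FiniteMeasure

variable {ν : Measure ℝ} [IsFiniteMeasure ν]

lemma re_charFun_eq_integral_cos (t : ℝ) : (charFun ν t).re = ∫ x, cos (t * x) ∂ν := by
  have hint : Integrable (fun x : ℝ ↦ Complex.exp (t * x * Complex.I)) ν :=
    Integrable.of_bound (by fun_prop) 1 (ae_of_all _ fun x ↦ by
      rw [← Complex.ofReal_mul, Complex.norm_exp_ofReal_mul_I])
  rw [charFun_apply_real, ← Complex.reCLM_apply, ← Complex.reCLM.integral_comp_comm hint]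
  simp_rw [Complex.reCLM_apply, ← Complex.ofReal_mul, Complex.exp_ofReal_mul_I_re]

lemma integral_fejerKernel_eq_integral_re_charFun :
    ∫ x, fejerKernel x ∂ν = ∫ t in (0 : ℝ)..1, 4 * (1 - t) * (charFun ν t).re := by
  have hint : Integrable (Function.uncurry fun t x ↦ 4 * (1 - t) * cos (t * x))
      ((volume.restrict (Set.uIoc 0 1)).prod ν) := by
    have hweight : IntegrableOn (fun t : ℝ ↦ 4 * (1 - t)) (Set.uIoc 0 1) :=
      (by fun_prop : Continuous fun t : ℝ ↦ 4 * (1 - t)).integrableOn_uIoc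
    refine (hweight.comp_fst ν).mul_bdd (c := 1) (by fun_prop) (ae_of_all _ fun z ↦ ?_)
    simpa using abs_cos_le_one (z.1 * z.2)
  simp_rw [← integral_mul_cos_eq_fejerKernel, re_charFun_eq_integral_cos, ← integral_const_mul]
  exact (intervalIntegral_integral_swap hint).symm

lemma measureReal_Icc_le_integral_fejerKernel :
    ν.real (Set.Icc (-1) 1) ≤ ∫ x, fejerKernel x ∂ν := by
  have hint : Integrable fejerKernel ν :=
    Integrable.of_bound measurable_fejerKernel.aestronglyMeasurable 2 (ae_of_all _ fun u ↦ by
      rw [norm_of_nonneg (fejerKernel_nonneg u)]; exact fejerKernel_le_two u)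
  calc ν.real (Set.Icc (-1) 1) ≤ ν.real {x | 1 ≤ fejerKernel x} :=
        measureReal_mono fun x hx ↦ one_le_fejerKernel (abs_le.mpr hx)
    _ ≤ ∫ x, fejerKernel x ∂ν := by
        simpa using mul_meas_ge_le_integral_of_nonneg (ae_of_all _ fejerKernel_nonneg) hint 1

lemma measureReal_Icc_neg_one_one_le_of_norm_charFun_le {A r : ℝ} (hr : r < 1)
    (h : ∀ t, 0 < t → ‖charFun ν t‖ ≤ A * t ^ (-r)) :
    ν.real (Set.Icc (-1) 1) ≤ 4 * A / (1 - r) := by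
  have hrpow : IntervalIntegrable (fun t : ℝ ↦ t ^ (-r)) volume 0 1 :=
    intervalIntegral.intervalIntegrable_rpow' (by linarith)
  calc ν.real (Set.Icc (-1) 1) ≤ ∫ x, fejerKernel x ∂ν := measureReal_Icc_le_integral_fejerKernel
    _ = ∫ t in (0 : ℝ)..1, 4 * (1 - t) * (charFun ν t).re :=
        integral_fejerKernel_eq_integral_re_charFun
    _ ≤ ∫ t in (0 : ℝ)..1, 4 * A * t ^ (-r) := by
        refine intervalIntegral.integral_mono_on_of_le_Ioo zero_le_one
          ((by fun_prop : Continuous _).intervalIntegrable _ _) (hrpow.const_mul _) fun t ht ↦ ?_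
        calc 4 * (1 - t) * (charFun ν t).re ≤ 4 * (1 - t) * ‖charFun ν t‖ := by
              gcongr
              · linarith [ht.2]
              · exact Complex.re_le_norm _
          _ ≤ 4 * ‖charFun ν t‖ := by nlinarith [ht.1, norm_nonneg (charFun ν t)]
          _ ≤ 4 * A * t ^ (-r) := by linarith [h t ht.1]
    _ = 4 * A / (1 - r) := by
        rw [intervalIntegral.integral_const_mul, integral_rpow (Or.inl (by linarith)),
          zero_rpow (by linarith), one_rpow]
        field_simp
        ring

lemma measureReal_Icc_le_of_norm_charFun_le {A r δ : ℝ} (hr : r < 1) (hδ : 0 < δ)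
    (h : ∀ t, 0 < t → ‖charFun ν t‖ ≤ A * t ^ (-r)) :
    ν.real (Set.Icc (-δ) δ) ≤ 4 * A * δ ^ r / (1 - r) := by
  have hscaled : ∀ t, 0 < t → ‖charFun (ν.map (δ⁻¹ * ·)) t‖ ≤ A * δ ^ r * t ^ (-r) := by
    intro t ht
    rw [charFun_map_mul]
    calc ‖charFun ν (δ⁻¹ * t)‖ ≤ A * (δ⁻¹ * t) ^ (-r) := h _ (by positivity)
      _ = A * δ ^ r * t ^ (-r) := by
        rw [mul_rpow (by positivity) ht.le, inv_rpow hδ.le, ← rpow_neg hδ.le, neg_neg, mul_assoc]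
  have hpre : (δ⁻¹ * ·) ⁻¹' Set.Icc (-1) 1 = Set.Icc (-δ) δ := by
    ext x
    simp only [Set.mem_preimage, Set.mem_Icc, ← div_eq_inv_mul, le_div_iff₀ hδ, div_le_iff₀ hδ]
    simp [neg_mul]
  have := measureReal_Icc_neg_one_one_le_of_norm_charFun_le hr hscaled
  rwa [map_measureReal_apply (by fun_prop) measurableSet_Icc, hpre, ← mul_assoc] at this

end FiniteMeasure

lemma norm_charFun_map_sub_const {α : Type*} [MeasurableSpace α] {μ : Measure α} {f : α → ℝ}
    (hf : AEMeasurable f μ) (m t : ℝ) :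
    ‖charFun (μ.map (fun x ↦ f x - m)) t‖ = ‖∫ x, Complex.exp (Complex.I * t * f x) ∂μ‖ := by
  have hexp (x : α) : Complex.exp (t * ↑(f x - m) * Complex.I) =
      Complex.exp (Complex.I * t * f x) * Complex.exp (↑(-(t * m)) * Complex.I) := by
    rw [← Complex.exp_add]; push_cast; ring_nf
  rw [charFun_apply_real, integral_map (hf.sub_const m) (by fun_prop)]
  simp_rw [hexp, integral_mul_const, norm_mul, Complex.norm_exp_ofReal_mul_I, mul_one]

lemma measureReal_abs_sub_le_of_norm_integral_exp_le {α : Type*} [MeasurableSpace α]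
    {μ : Measure α} [IsFiniteMeasure μ] {f : α → ℝ} (hf : AEMeasurable f μ) {A r δ : ℝ}
    (hr : r < 1) (hδ : 0 < δ)
    (h : ∀ t : ℝ, 0 < t → ‖∫ x, Complex.exp (Complex.I * t * f x) ∂μ‖ ≤ A * t ^ (-r)) (m : ℝ) :
    μ.real {x | |f x - m| ≤ δ} ≤ 4 * A * δ ^ r / (1 - r) := by
  have hpre : (fun x ↦ f x - m) ⁻¹' Set.Icc (-δ) δ = {x | |f x - m| ≤ δ} := by
    ext x
    simp [abs_le]
  rw [← hpre, ← map_measureReal_apply_of_aemeasurable (hf.sub_const m) measurableSet_Icc]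
  exact measureReal_Icc_le_of_norm_charFun_le hr hδ fun t ht ↦
    (norm_charFun_map_sub_const hf m t).trans_le (h t ht)

lemma one_add_rpow_neg_le_rpow_neg {t r ρ : ℝ} (ht : 0 < t) (hr : 0 ≤ r) (hrρ : r ≤ ρ) :
    (1 + t) ^ (-ρ) ≤ t ^ (-r) :=
  calc (1 + t) ^ (-ρ) ≤ (1 + t) ^ (-r) := rpow_le_rpow_of_exponent_le (by linarith) (by linarith)
    _ ≤ t ^ (-r) := rpow_le_rpow_of_nonpos ht (by linarith) (by linarith)

theorem small_oscillation_set_of_rho_gamma_irregular_general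
    (p : ℝ) (f : ℝ → ℝ)
    (hf : MemLp f (ENNReal.ofReal p) (volume.restrict (Set.Ioo (0:ℝ) 1)))
    (ρ γ c : ℝ) (hρ0 : 0 < ρ) (hρ1 : ρ ≤ 1)
    (hc : 0 < c)
    -- `(ρ,γ)`-irregularity: the Fourier transform of the occupation measure of
    -- `f` on any interval `J ⊆ [0,1]` decays like `c |J|^γ (1+|ξ|)^{-ρ}`.
    (hirr : ∀ a b : ℝ, 0 ≤ a → a < b → b ≤ 1 → ∀ ξ : ℝ,
      ‖∫ x in Set.Ioo a b, Complex.exp (Complex.I * ξ * f x)‖ ≤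
        c * (b - a) ^ γ * (1 + |ξ|) ^ (-ρ))
    (q : ℝ) (hq : 1 < q * ρ) :
    ∃ C : ℝ, 0 < C ∧ ∀ ε : ℝ, 0 < ε → ∀ a b : ℝ, 0 ≤ a → a < b → b ≤ 1 →
      (volume { x ∈ Set.Ioo a b |
          |f x - ⨍ y in Set.Ioo a b, f y| ≤
            ε * c ^ (-q) * (b - a) ^ (q * (1 - γ)) }).toReal ≤
        C * ε ^ (1 / q) * (b - a) := by
  have hq1 : 1 < q := by nlinarith
  have hq0 : 0 < q := by linarith
  have hrq : 1 / q < 1 := (div_lt_one hq0).mpr hq1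
  have hrρ : 1 / q ≤ ρ := by rw [div_le_iff₀ hq0]; linarith
  refine ⟨4 * q / (q - 1), div_pos (by linarith) (by linarith), ?_⟩
  intro ε hε a b ha hab hb
  set δ := ε * c ^ (-q) * (b - a) ^ (q * (1 - γ))
  have hL : 0 < b - a := by linarith
  have hδ : 0 < δ := by positivity
  have hfJ : AEMeasurable f (volume.restrict (Set.Ioo a b)) :=
    hf.aestronglyMeasurable.aemeasurable.mono_measure
      (Measure.restrict_mono (Set.Ioo_subset_Ioo ha hb) le_rfl)
  have hdecay (t : ℝ) (ht : 0 < t) : ‖∫ x in Set.Ioo a b, Complex.exp (Complex.I * t * f x)‖ ≤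
      c * (b - a) ^ γ * t ^ (-(1 / q)) := by
    refine (hirr a b ha hab hb t).trans ?_
    rw [abs_of_pos ht]
    gcongr
    exact one_add_rpow_neg_le_rpow_neg ht (by positivity) hrρ
  have hδq : c * (b - a) ^ γ * δ ^ (1 / q) = ε ^ (1 / q) * (b - a) := by
    rw [mul_rpow (by positivity) (by positivity), mul_rpow hε.le (by positivity),
      ← rpow_mul hc.le, ← rpow_mul hL.le, show -q * (1 / q) = -1 by field_simp,
      show q * (1 - γ) * (1 / q) = 1 - γ by field_simp, rpow_neg_one, rpow_sub hL, rpow_one]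
    field_simp
  calc (volume { x ∈ Set.Ioo a b | |f x - ⨍ y in Set.Ioo a b, f y| ≤ δ }).toReal
      = (volume.restrict (Set.Ioo a b)).real {x | |f x - ⨍ y in Set.Ioo a b, f y| ≤ δ} := by
        rw [measureReal_restrict_apply' measurableSet_Ioo, Set.inter_comm, measureReal_def]
        rfl
    _ ≤ 4 * (c * (b - a) ^ γ) * δ ^ (1 / q) / (1 - 1 / q) :=
        measureReal_abs_sub_le_of_norm_integral_exp_le hfJ hrq hδ hdecay _
    _ = 4 * q / (q - 1) * ε ^ (1 / q) * (b - a) := by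
        rw [mul_assoc 4, hδq]
        field_simp

/-- For a `(ρ,γ)`-irregular function, the set where `f` stays close to its
average on an interval `J` occupies a small fraction of `J`. -/
theorem small_oscillation_set_of_rho_gamma_irregular
    (p : ℝ) (hp : 1 ≤ p) (f : ℝ → ℝ)
    (hf : MemLp f (ENNReal.ofReal p) (volume.restrict (Set.Ioo (0:ℝ) 1)))
    (ρ γ c : ℝ) (hρ0 : 0 < ρ) (hρ1 : ρ ≤ 1) (hγ0 : 0 ≤ γ) (hγ1 : γ < 1)
    (hc : 0 < c)
    -- `(ρ,γ)`-irregularity: the Fourier transform of the occupation measure of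
    -- `f` on any interval `J ⊆ [0,1]` decays like `c |J|^γ (1+|ξ|)^{-ρ}`.
    (hirr : ∀ a b : ℝ, 0 ≤ a → a < b → b ≤ 1 → ∀ ξ : ℝ,
      ‖∫ x in Set.Ioo a b, Complex.exp (Complex.I * ξ * f x)‖ ≤
        c * (b - a) ^ γ * (1 + |ξ|) ^ (-ρ))
    (q : ℝ) (hq : 1 < q * ρ) :
    ∃ C : ℝ, 0 < C ∧ ∀ ε : ℝ, 0 < ε → ∀ a b : ℝ, 0 ≤ a → a < b → b ≤ 1 →
      (volume { x ∈ Set.Ioo a b |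
          |f x - ⨍ y in Set.Ioo a b, f y| ≤
            ε * c ^ (-q) * (b - a) ^ (q * (1 - γ)) }).toReal ≤
        C * ε ^ (1 / q) * (b - a) :=
  small_oscillation_set_of_rho_gamma_irregular_general p f hf ρ γ c hρ0 hρ1 hc hirr q hq
end
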